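/- arXiv:1501.06731 — 2 statements merged into one kernel-verified Lean document; each statement's English description precedes it below -/
import Mathlib

section
/- If P is a K-projective complex in an abelian category 𝓜, then for every complex M the localization map Hom_{K(𝓜)}(P, M) → Hom_{D(𝓜)}(P, M) is bijective. -/
/-!
Exactness of `Hom(P, N)` in degree `0` says that every chain map `P ⟶ N` is null-homotopic,
since a `(-1)`-cochain bounding the `0`-cocycle `f` is exactly a homotopy `f ∼ 0`. For acyclic `N`
this is the definition of `CochainComplex.IsKProjective`, and `Qh` is bijective on morphisms out
of K-projective complexes because they are left orthogonal to the acyclic complexes, which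
`Qh` localizes away.
-/

open CategoryTheory Limits CochainComplex

lemma CochainComplex.HomComplex.nonempty_homotopy_zero_of_exactAt_zero
    {C : Type*} [Category C] [Preadditive C] {K L : CochainComplex C ℤ}
    (h : (HomComplex K L).ExactAt 0) (f : K ⟶ L) : Nonempty (Homotopy f 0) := by
  rw [HomologicalComplex.exactAt_iff' _ (-1) 0 1 (by simp) (by simp),
    ShortComplex.ab_exact_iff] at h
  obtain ⟨y, hy⟩ := h (Cochain.ofHom f) (show δ 0 1 (Cochain.ofHom f) = 0 by simp)
  have hy : δ (-1) 0 y = Cochain.ofHom f := hy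
  exact ⟨(Cochain.equivHomotopy f 0).symm ⟨y, by simp [hy]⟩⟩

/-- If `P` is a K-projective complex in an abelian category `𝓜` (i.e.
`Hom(P, N)` is acyclic for every acyclic `N`), then for every complex `M` the map
`Hom_{K(𝓜)}(P, M) → Hom_{D(𝓜)}(P, M)` induced by the localization functor `Qh` is
bijective. -/
theorem K_projective_localization_hom_bijective
    {𝓜 : Type*} [Category 𝓜] [Abelian 𝓜] [HasDerivedCategory 𝓜]
    (P : CochainComplex 𝓜 ℤ)
    (hP : ∀ N : CochainComplex 𝓜 ℤ, (∀ i, N.ExactAt i) →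
      ∀ i, (HomComplex P N).ExactAt i)
    (M : CochainComplex 𝓜 ℤ) :
    Function.Bijective
      (fun f : (HomotopyCategory.quotient 𝓜 (ComplexShape.up ℤ)).obj P ⟶
          (HomotopyCategory.quotient 𝓜 (ComplexShape.up ℤ)).obj M =>
        DerivedCategory.Qh.map f) := by
  have : P.IsKProjective :=
    ⟨fun f hN ↦ HomComplex.nonempty_homotopy_zero_of_exactAt_zero (hP _ hN 0) f⟩
  exact IsKProjective.Qh_map_bijective P _
end

section
/- If T₁ and T₂ are two-sided tilting complexes over a K-algebra A, then T₁ ⊗^L_A T₂ is also a two-sided tilting complex over A. Consequently, isomorphism classes of two-sided tilting complexes over A form a group (the derived Picard group) under derived tensor product, with identity the class of A. -/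
open CategoryTheory MonoidalCategory

/-- A two-sided tilting complex, formulated in a monoidal category `𝒟` standing for the
derived category `D(Mod A^e)` of bimodules over a `K`-algebra `A`, equipped with the
derived tensor product `⊗^L_A` (with unit the bimodule `A`): an object `T` admitting a
quasi-inverse `T^∨` with `T ⊗^L_A T^∨ ≅ A` and `T^∨ ⊗^L_A T ≅ A`. -/
def IsTwoSidedTilting {𝒟 : Type*} [Category 𝒟] [MonoidalCategory 𝒟] (T : 𝒟) : Prop :=
  ∃ T' : 𝒟, Nonempty (T ⊗ T' ≅ 𝟙_ 𝒟) ∧ Nonempty (T' ⊗ T ≅ 𝟙_ 𝒟)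

/-- The set of isomorphism classes of two-sided tilting complexes: the underlying set of
the derived Picard group `DPic(A)`. -/
def TiltingClass (𝒟 : Type*) [Category 𝒟] [MonoidalCategory 𝒟] : Type _ :=
  Quotient (isIsomorphicSetoid (ObjectProperty.FullSubcategory (fun T : 𝒟 => IsTwoSidedTilting T)))

/-- The isomorphism class of a two-sided tilting complex. -/
def TiltingClass.mk {𝒟 : Type*} [Category 𝒟] [MonoidalCategory 𝒟] (T : 𝒟)
    (hT : IsTwoSidedTilting T) : TiltingClass 𝒟 :=
  Quotient.mk (isIsomorphicSetoid (ObjectProperty.FullSubcategory (fun T : 𝒟 => IsTwoSidedTilting T)))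
    ⟨T, hT⟩

/-! The tilting objects form a monoidal full subcategory, since a quasi-inverse of `T₁ ⊗ T₂`
is `T₂^∨ ⊗ T₁^∨`. Its skeleton is therefore a monoid, and every element of it is a unit,
with inverse the class of a quasi-inverse. -/

namespace IsTwoSidedTilting

variable {𝒟 : Type*} [Category 𝒟] [MonoidalCategory 𝒟]

def tensorNestedIsoUnit {X X' Y Y' : 𝒟} (e : X ⊗ X' ≅ 𝟙_ 𝒟) (f : Y ⊗ Y' ≅ 𝟙_ 𝒟) :
    (X ⊗ Y) ⊗ (Y' ⊗ X') ≅ 𝟙_ 𝒟 :=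
  calc (X ⊗ Y) ⊗ (Y' ⊗ X')
      ≅ X ⊗ (Y ⊗ (Y' ⊗ X')) := α_ _ _ _
    _ ≅ X ⊗ ((Y ⊗ Y') ⊗ X') := whiskerLeftIso X (α_ _ _ _).symm
    _ ≅ X ⊗ (𝟙_ 𝒟 ⊗ X') := whiskerLeftIso X (whiskerRightIso f X')
    _ ≅ X ⊗ X' := whiskerLeftIso X (λ_ X')
    _ ≅ 𝟙_ 𝒟 := e

theorem unit : IsTwoSidedTilting (𝟙_ 𝒟) :=
  ⟨𝟙_ 𝒟, ⟨λ_ _⟩, ⟨λ_ _⟩⟩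

theorem tensor {T₁ T₂ : 𝒟} (h₁ : IsTwoSidedTilting T₁) (h₂ : IsTwoSidedTilting T₂) :
    IsTwoSidedTilting (T₁ ⊗ T₂) := by
  obtain ⟨S₁, ⟨e₁⟩, ⟨f₁⟩⟩ := h₁
  obtain ⟨S₂, ⟨e₂⟩, ⟨f₂⟩⟩ := h₂
  exact ⟨S₂ ⊗ S₁, ⟨tensorNestedIsoUnit e₁ e₂⟩, ⟨tensorNestedIsoUnit f₂ f₁⟩⟩

instance isMonoidal : ObjectProperty.IsMonoidal (IsTwoSidedTilting : ObjectProperty 𝒟) where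
  prop_unit := unit
  prop_tensor _ _ := tensor

end IsTwoSidedTilting

namespace TiltingClass

variable {𝒟 : Type*} [Category 𝒟] [MonoidalCategory 𝒟]

noncomputable abbrev monoid : Monoid (TiltingClass 𝒟) :=
  inferInstanceAs
    (Monoid (Skeleton (ObjectProperty.FullSubcategory (IsTwoSidedTilting : ObjectProperty 𝒟))))

attribute [local instance] monoid

theorem mk_eq_mk_of_iso {T T' : 𝒟} (e : T ≅ T') (h : IsTwoSidedTilting T)
    (h' : IsTwoSidedTilting T') : mk T h = mk T' h' :=
  Quotient.sound ⟨ObjectProperty.isoMk _ e⟩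

theorem mk_mul_mk {T₁ T₂ : 𝒟} (h₁ : IsTwoSidedTilting T₁) (h₂ : IsTwoSidedTilting T₂) :
    mk T₁ h₁ * mk T₂ h₂ = mk (T₁ ⊗ T₂) (h₁.tensor h₂) :=
  (Skeleton.toSkeleton_tensorObj
    (C := ObjectProperty.FullSubcategory (IsTwoSidedTilting : ObjectProperty 𝒟))
    ⟨T₁, h₁⟩ ⟨T₂, h₂⟩).symm

theorem one_eq : (1 : TiltingClass 𝒟) = mk (𝟙_ 𝒟) IsTwoSidedTilting.unit :=
  rfl

theorem isUnit (x : TiltingClass 𝒟) : IsUnit x := by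
  obtain ⟨⟨T, hT⟩⟩ := x
  change IsUnit (mk T hT)
  obtain ⟨S, ⟨e⟩, ⟨f⟩⟩ := id hT
  have hS : IsTwoSidedTilting S := ⟨T, ⟨f⟩, ⟨e⟩⟩
  refine isUnit_iff_exists.mpr ⟨mk S hS, ?_, ?_⟩
  · rw [mk_mul_mk, one_eq]
    exact mk_eq_mk_of_iso e _ _
  · rw [mk_mul_mk, one_eq]
    exact mk_eq_mk_of_iso f _ _

/-- The derived Picard group `DPic(A)`. -/
noncomputable abbrev group : Group (TiltingClass 𝒟) :=
  groupOfIsUnit isUnit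

end TiltingClass

/-- If `T₁` and `T₂` are two-sided tilting complexes over `A`, then so is
`T₁ ⊗^L_A T₂`; consequently the isomorphism classes of two-sided tilting complexes form
a group (the derived Picard group) under derived tensor product, with identity the
class of `A`. -/
theorem tensor_of_tilting_is_tilting_and_derived_Picard_group
    (𝒟 : Type*) [Category 𝒟] [MonoidalCategory 𝒟] :
    (∀ T₁ T₂ : 𝒟, IsTwoSidedTilting T₁ → IsTwoSidedTilting T₂ →
      IsTwoSidedTilting (T₁ ⊗ T₂)) ∧
    ∃ _ : Group (TiltingClass 𝒟),
      (∀ (T₁ T₂ : 𝒟) (h₁ : IsTwoSidedTilting T₁) (h₂ : IsTwoSidedTilting T₂)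
        (h₁₂ : IsTwoSidedTilting (T₁ ⊗ T₂)),
          TiltingClass.mk T₁ h₁ * TiltingClass.mk T₂ h₂ =
            TiltingClass.mk (T₁ ⊗ T₂) h₁₂) ∧
      (∀ h : IsTwoSidedTilting (𝟙_ 𝒟),
        (1 : TiltingClass 𝒟) = TiltingClass.mk (𝟙_ 𝒟) h) :=
  ⟨fun _ _ => IsTwoSidedTilting.tensor, TiltingClass.group,
   fun _ _ h₁ h₂ _ => TiltingClass.mk_mul_mk h₁ h₂, fun _ => TiltingClass.one_eq⟩
end
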